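/- Let q ∈ ℂ be nonzero with q² ≠ 1, and let b₀ ∈ ℂ be nonzero. Define an algebra endomorphism data on the quantum disc by k(z) = q² z, k(z*) = q⁻² z*, e(z) = q b₀⁻¹ z², e(z*) = -q⁻¹ b₀⁻¹, f(z) = -b₀, f(z*) = q² b₀ z*². Then e applied to the defining relation is consistent: e(z z*) computed via the twisted Leibniz rule e(ab) = a·e(b) + e(a)·k(b) equals q² e(z* z) + 0, i.e., z·e(z*) + e(z)·k(z*) = q²(z*·e(z) + e(z*)·k(z)) in Pol(D)_q. -/
import Mathlib


/-- The defining relation of the quantum disc: z z* = q² z* z + (1 - q²). -/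
inductive DiscRel (q : ℂ) : FreeAlgebra ℂ Bool → FreeAlgebra ℂ Bool → Prop
  | rel : DiscRel q (FreeAlgebra.ι ℂ true * FreeAlgebra.ι ℂ false)
      ((q ^ 2) • (FreeAlgebra.ι ℂ false * FreeAlgebra.ι ℂ true) +
        algebraMap ℂ (FreeAlgebra ℂ Bool) (1 - q ^ 2))

/-- The quantum disc algebra Pol(D)_q. -/
abbrev PolDisc (q : ℂ) := RingQuot (DiscRel q)

/-- The generator z. -/
noncomputable def Pz (q : ℂ) : PolDisc q :=
  RingQuot.mkAlgHom ℂ (DiscRel q) (FreeAlgebra.ι ℂ true)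

/-- The generator z*. -/
noncomputable def Pzs (q : ℂ) : PolDisc q :=
  RingQuot.mkAlgHom ℂ (DiscRel q) (FreeAlgebra.ι ℂ false)

/-- The element y = 1 - z z*. -/
noncomputable def Py (q : ℂ) : PolDisc q := 1 - Pz q * Pzs q

/-- Consistency of the action of e with the defining relation, for the
series (1a)-type data: e(z) = q b₀⁻¹ z², e(z*) = -q⁻¹ b₀⁻¹,
k(z) = q² z, k(z*) = q⁻² z*.  Then
z·e(z*) + e(z)·k(z*) = q² (z*·e(z) + e(z*)·k(z)). -/
theorem e_consistent (q : ℂ) (hq : q ≠ 0) (hq2 : q ^ 2 ≠ 1) (b₀ : ℂ) (hb₀ : b₀ ≠ 0) :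
    Pz q * ((-(q⁻¹ * b₀⁻¹)) • (1 : PolDisc q)) +
      ((q * b₀⁻¹) • (Pz q ^ 2)) * ((q ^ 2)⁻¹ • Pzs q) =
    (q ^ 2) • (Pzs q * ((q * b₀⁻¹) • (Pz q ^ 2)) +
      ((-(q⁻¹ * b₀⁻¹)) • (1 : PolDisc q)) * ((q ^ 2) • Pz q)) := by
  have hrel : Pz q * Pzs q = (q ^ 2) • (Pzs q * Pz q) + (1 - q ^ 2) • (1 : PolDisc q) := by
    have h := RingQuot.mkAlgHom_rel ℂ (DiscRel.rel (q := q))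
    simp only [map_mul, map_add, map_smul, map_one] at h
    simpa [Pz, Pzs, Algebra.algebraMap_eq_smul_one] using h
  have h2 : Pz q ^ 2 * Pzs q =
      (q ^ 4) • (Pzs q * Pz q ^ 2) + (1 - q ^ 4) • Pz q := by
    have e1 : Pz q ^ 2 * Pzs q = Pz q * (Pz q * Pzs q) := by
      rw [pow_two, mul_assoc]
    rw [e1, hrel, mul_add, mul_smul_comm, ← mul_assoc, hrel]
    simp only [smul_mul_assoc, mul_smul_comm, add_mul, mul_one, one_mul, mul_assoc]
    rw [show Pz q * Pz q = Pz q ^ 2 from (pow_two _).symm]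
    match_scalars <;> ring
  simp only [smul_mul_assoc, mul_smul_comm, mul_one, one_mul, smul_smul, smul_add]
  rw [h2]
  match_scalars <;> field_simp <;> ring
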